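/- Let f : ℝ³ → ℝ be smooth, let α, c, χ ∈ ℝ, and suppose L_c^{(α)}f(x) = χ·f(x) for all x ∈ ℝ³ with ‖x‖ < 1. Then the angular gradient x×∇f is an eigenfunction of the Sturm–Liouville operator of the second kind with eigenvalue χ + 2α + 2: for every x ∈ ℝ³ with ‖x‖ < 1, D_c^{(α)}(y ↦ (y×∇f)(y))(x) = (χ + 2α + 2)·(x×∇f)(x). -/

import Mathlib

noncomputable section
open MeasureTheory
open scoped RealInnerProductSpace

/-- ℝ³ with the Euclidean structure. -/
abbrev E3 : Type := EuclideanSpace ℝ (Fin 3)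

/-- The `i`-th partial derivative ∂ᵢ f. -/
def pd (i : Fin 3) (f : E3 → ℝ) (x : E3) : ℝ := fderiv ℝ f x (EuclideanSpace.single i 1)

/-- Build a vector of E3 from its three coordinates. -/
def vec (a b c : ℝ) : E3 := (WithLp.equiv 2 (Fin 3 → ℝ)).symm ![a, b, c]

/-- The gradient ∇f. -/
def grad (f : E3 → ℝ) (x : E3) : E3 := vec (pd 0 f x) (pd 1 f x) (pd 2 f x)

/-- The Laplacian Δf = ∂₁²f + ∂₂²f + ∂₃²f. -/
def lap (f : E3 → ℝ) (x : E3) : ℝ := pd 0 (pd 0 f) x + pd 1 (pd 1 f) x + pd 2 (pd 2 f) x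

/-- The radial derivative (x·∇f)(x) = ⟨x, ∇f(x)⟩. -/
def rad (f : E3 → ℝ) (x : E3) : ℝ := ⟪x, grad f x⟫

/-- The cross product in ℝ³. -/
def cross (a b : E3) : E3 :=
  vec (a 1 * b 2 - a 2 * b 1) (a 2 * b 0 - a 0 * b 2) (a 0 * b 1 - a 1 * b 0)

/-- The angular gradient (x×∇f)(x) = x × ∇f(x). -/
def angGrad (f : E3 → ℝ) (x : E3) : E3 := cross x (grad f x)

/-- The divergence ∇·F. -/
def fdiv (F : E3 → E3) (x : E3) : ℝ :=
  pd 0 (fun y => F y 0) x + pd 1 (fun y => F y 1) x + pd 2 (fun y => F y 2) x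

/-- The curl ∇×F. -/
def curl (F : E3 → E3) (x : E3) : E3 :=
  vec (pd 1 (fun y => F y 2) x - pd 2 (fun y => F y 1) x)
      (pd 2 (fun y => F y 0) x - pd 0 (fun y => F y 2) x)
      (pd 0 (fun y => F y 1) x - pd 1 (fun y => F y 0) x)

/-- The Laplace–Beltrami operator Δ₀f(x) = ‖x‖²Δf(x) − (x·∇)(x·∇f)(x) − (x·∇f)(x). -/
def lapBel (f : E3 → ℝ) (x : E3) : ℝ := ‖x‖^2 * lap f x - rad (rad f) x - rad f x

/-- Laplace–Beltrami acting componentwise on vector fields. -/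
def lapBelV (F : E3 → E3) (x : E3) : E3 :=
  vec (lapBel (fun y => F y 0) x) (lapBel (fun y => F y 1) x) (lapBel (fun y => F y 2) x)

/-- The Sturm–Liouville operator of the first kind
L_c^{(α)}f = −Δf + (x·∇)(x·∇f) + (2α+3)(x·∇f) + c²‖x‖²f. -/
def SL (α c : ℝ) (f : E3 → ℝ) (x : E3) : ℝ :=
  -lap f x + rad (rad f) x + (2*α+3) * rad f x + c^2 * ‖x‖^2 * f x

/-- L_c^{(α)} acting componentwise on vector fields. -/
def SLv (α c : ℝ) (F : E3 → E3) (x : E3) : E3 :=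
  vec (SL α c (fun y => F y 0) x) (SL α c (fun y => F y 1) x) (SL α c (fun y => F y 2) x)

/-- The Sturm–Liouville operator of the second kind
D_c^{(α)}F(x) = (1−‖x‖²)^{−α}·(∇×((1−‖y‖²)^{α+1}∇×F))(x) − Δ₀F(x) + c²‖x‖²F(x). -/
def Dop (α c : ℝ) (F : E3 → E3) (x : E3) : E3 :=
  ((1 - ‖x‖^2) ^ (-α) : ℝ) • curl (fun y => ((1 - ‖y‖^2) ^ (α+1) : ℝ) • curl F y) x
    - lapBelV F x + (c^2 * ‖x‖^2) • F x

/-- The operator (xᵢ∂ⱼ − xⱼ∂ᵢ). -/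
def angDer (i j : Fin 3) (g : E3 → ℝ) (y : E3) : ℝ := y i * pd j g y - y j * pd i g y

-- ===== auxiliary lemmas =====
lemma vec_zero (a b c : ℝ) : vec a b c 0 = a := rfl
lemma vec_one (a b c : ℝ) : vec a b c 1 = b := rfl
lemma vec_two (a b c : ℝ) : vec a b c 2 = c := rfl

lemma inner_vec (x : E3) (a b c : ℝ) : ⟪x, vec a b c⟫ = x 0 * a + x 1 * b + x 2 * c := by
  simp [vec, PiLp.inner_apply, Fin.sum_univ_three, RCLike.inner_apply, mul_comm]

lemma norm_sq_expand (y : E3) : ‖y‖^2 = y 0^2 + y 1^2 + y 2^2 := by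
  rw [EuclideanSpace.norm_eq, Real.sq_sqrt (by positivity)]
  simp [Fin.sum_univ_three, sq_abs]

@[fun_prop] lemma diff_coord (j : Fin 3) : Differentiable ℝ (fun y : E3 => y j) :=
  (EuclideanSpace.proj (𝕜 := ℝ) j).differentiable
@[fun_prop] lemma diffAt_coord (j : Fin 3) (x : E3) :
    DifferentiableAt ℝ (fun y : E3 => y j) x := (diff_coord j).differentiableAt

lemma contDiff_pd {f : E3 → ℝ} (hf : ContDiff ℝ (⊤ : ℕ∞) f) (i : Fin 3) : ContDiff ℝ (⊤ : ℕ∞) (pd i f) := by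
  have h1 : ContDiff ℝ (⊤ : ℕ∞) (fderiv ℝ f) := hf.fderiv_right (by simp)
  exact (ContinuousLinearMap.apply ℝ ℝ (EuclideanSpace.single i (1:ℝ))).contDiff.comp h1

lemma pd_comm {f : E3 → ℝ} (hf : ContDiff ℝ (⊤ : ℕ∞) f) (i j : Fin 3) :
    pd i (pd j f) = pd j (pd i f) := by
  funext x
  have hf2 : ContDiffAt ℝ ((2:ℕ∞) : WithTop ℕ∞) f x := by
    exact_mod_cast hf.contDiffAt.of_le (by exact_mod_cast le_top)
  have hsymm : IsSymmSndFDerivAt ℝ f x := hf2.isSymmSndFDerivAt (by simp [minSmoothness_of_isRCLikeNormedField])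
  have hdf : DifferentiableAt ℝ (fderiv ℝ f) x :=
    ((hf.fderiv_right (m := (⊤ : ℕ∞)) (by simp)).differentiable (by simp)).differentiableAt
  have key : ∀ v w : E3, fderiv ℝ (fun y => fderiv ℝ f y w) x v
      = fderiv ℝ (fderiv ℝ f) x v w := by
    intro v w
    rw [fderiv_clm_apply hdf (differentiableAt_const w)]
    simp
  show fderiv ℝ (fun y => fderiv ℝ f y _) x _ = fderiv ℝ (fun y => fderiv ℝ f y _) x _
  rw [key, key]
  exact hsymm _ _

lemma pd_sub {g h : E3 → ℝ} {x : E3} (hg : DifferentiableAt ℝ g x) (hh : DifferentiableAt ℝ h x)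
    (i : Fin 3) : pd i (fun y => g y - h y) x = pd i g x - pd i h x := by
  simp [pd, fderiv_fun_sub hg hh]

lemma pd_add {g h : E3 → ℝ} {x : E3} (hg : DifferentiableAt ℝ g x) (hh : DifferentiableAt ℝ h x)
    (i : Fin 3) : pd i (fun y => g y + h y) x = pd i g x + pd i h x := by
  simp [pd, fderiv_fun_add hg hh]

lemma pd_mul {g h : E3 → ℝ} {x : E3} (hg : DifferentiableAt ℝ g x) (hh : DifferentiableAt ℝ h x)
    (i : Fin 3) : pd i (fun y => g y * h y) x = pd i g x * h x + g x * pd i h x := by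
  simp only [pd, fderiv_fun_mul hg hh]; simp; ring

lemma pd_const_mul {g : E3 → ℝ} {x : E3} (hg : DifferentiableAt ℝ g x) (c : ℝ)
    (i : Fin 3) : pd i (fun y => c * g y) x = c * pd i g x := by
  simp [pd, fderiv_const_mul hg]

lemma pd_const (c : ℝ) (i : Fin 3) (x : E3) : pd i (fun _ => c) x = 0 := by
  simp [pd]

lemma pd_coord (i j : Fin 3) (x : E3) :
    pd i (fun y => y j) x = if j = i then 1 else 0 := by
  have h : fderiv ℝ (fun y : E3 => y j) x = EuclideanSpace.proj j :=
    (EuclideanSpace.proj (𝕜 := ℝ) j).fderiv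
  simp [pd, h, EuclideanSpace.single_apply]

lemma pd_rpow {g : E3 → ℝ} {x : E3} (hg : DifferentiableAt ℝ g x) (hgx : g x ≠ 0) (β : ℝ)
    (i : Fin 3) : pd i (fun y => g y ^ β) x = β * g x ^ (β - 1) * pd i g x := by
  have h : HasFDerivAt (fun y => g y ^ β) ((β * g x ^ (β - 1)) • fderiv ℝ g x) x :=
    (Real.hasDerivAt_rpow_const (x := g x) (p := β) (Or.inl hgx)).comp_hasFDerivAt x
      hg.hasFDerivAt
  rw [pd, h.fderiv]; simp [pd]

lemma diffAt_rpow {g : E3 → ℝ} {x : E3} (hg : DifferentiableAt ℝ g x) (hgx : g x ≠ 0)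
    (β : ℝ) : DifferentiableAt ℝ (fun y => g y ^ β) x :=
  ((Real.hasDerivAt_rpow_const (x := g x) (p := β) (Or.inl hgx)).comp_hasFDerivAt x
      hg.hasFDerivAt).differentiableAt

lemma pd_neg {g : E3 → ℝ} {x : E3} (i : Fin 3) :
    pd i (fun y => -g y) x = -pd i g x := by
  simp [pd, fderiv_neg]

set_option maxHeartbeats 4000000 in
/-- if L_c^{(α)}f = χ·f on the unit ball then x×∇f is an eigenfunction
of D_c^{(α)} with eigenvalue χ + 2α + 2. -/
theorem stmt_18 (f : E3 → ℝ) (hf : ContDiff ℝ (⊤ : ℕ∞) f) (α c χ : ℝ)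
    (heig : ∀ x : E3, ‖x‖ < 1 → SL α c f x = χ * f x) :
    ∀ x : E3, ‖x‖ < 1 →
      Dop α c (angGrad f) x = (χ + 2*α + 2) • angGrad f x := by
  intro x hx
  have hd0 : Differentiable ℝ f := hf.differentiable (by simp)
  have hp : ∀ i, Differentiable ℝ (pd i f) := fun i => (contDiff_pd hf i).differentiable (by simp)
  have hpp : ∀ i j, Differentiable ℝ (pd i (pd j f)) :=
    fun i j => (contDiff_pd (contDiff_pd hf j) i).differentiable (by simp)
  have hppp : ∀ i j k, Differentiable ℝ (pd i (pd j (pd k f))) :=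
    fun i j k => (contDiff_pd (contDiff_pd (contDiff_pd hf k) j) i).differentiable (by simp)
  have hwpos : (0:ℝ) < 1 - ‖x‖^2 := by nlinarith [norm_nonneg x]
  have hwne : (1 - ‖x‖^2 : ℝ) ≠ 0 := ne_of_gt hwpos
  have hwfun : (fun y : E3 => 1 - ‖y‖^2) = fun y : E3 => 1 - (y 0*y 0 + y 1*y 1 + y 2*y 2) := by
    funext y; rw [norm_sq_expand]; ring
  have hdw : Differentiable ℝ (fun y : E3 => 1 - ‖y‖^2) := by rw [hwfun]; fun_prop
  have hWdiffAt : DifferentiableAt ℝ (fun y : E3 => (1 - ‖y‖^2)^(α+1)) x :=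
    diffAt_rpow hdw.differentiableAt hwne _
  have hpdw : ∀ i : Fin 3, pd i (fun y : E3 => 1 - ‖y‖^2) x = -2 * x i := by
    intro i
    rw [hwfun]
    have hi3 : i = 0 ∨ i = 1 ∨ i = 2 := by omega
    rcases hi3 with rfl|rfl|rfl <;>
    · simp (disch := fun_prop) only [pd_sub, pd_add, pd_mul, pd_coord, pd_const,
        Fin.reduceEq, reduceIte]
      ring
  have hpdWx : ∀ i : Fin 3, pd i (fun y : E3 => (1 - ‖y‖^2)^(α+1)) x
      = (α+1) * (1-‖x‖^2)^α * (-2 * x i) := by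
    intro i
    rw [pd_rpow hdw.differentiableAt hwne, hpdw, add_sub_cancel_right]
  have hpdWC : ∀ (i : Fin 3) (C : E3 → ℝ), DifferentiableAt ℝ C x →
      (1-‖x‖^2)^(-α) * pd i (fun y => (1-‖y‖^2)^(α+1) * C y) x
        = (α+1) * (-2 * x i) * C x + (1-‖x‖^2) * pd i C x := by
    intro i C hC
    rw [pd_mul hWdiffAt hC, hpdWx]
    have e1 : ((1-‖x‖^2:ℝ)^(-α)) * ((1-‖x‖^2)^α) = 1 := by
      rw [← Real.rpow_add hwpos]; norm_num
    have e2 : ((1-‖x‖^2:ℝ)^(-α)) * ((1-‖x‖^2)^(α+1)) = 1-‖x‖^2 := by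
      rw [← Real.rpow_add hwpos]; norm_num
    linear_combination ((α+1) * (-2 * x i) * C x) * e1 + (pd i C x) * e2
  -- Clairaut sorting
  have s10 := pd_comm hf 1 0
  have s20 := pd_comm hf 2 0
  have s21 := pd_comm hf 2 1
  have t10 : ∀ k, pd 1 (pd 0 (pd k f)) = pd 0 (pd 1 (pd k f)) :=
    fun k => pd_comm (contDiff_pd hf k) 1 0
  have t20 : ∀ k, pd 2 (pd 0 (pd k f)) = pd 0 (pd 2 (pd k f)) :=
    fun k => pd_comm (contDiff_pd hf k) 2 0
  have t21 : ∀ k, pd 2 (pd 1 (pd k f)) = pd 1 (pd 2 (pd k f)) :=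
    fun k => pd_comm (contDiff_pd hf k) 2 1
  -- structural expansions
  have hradf : ∀ g : E3 → ℝ, rad g
      = fun y => y 0 * pd 0 g y + y 1 * pd 1 g y + y 2 * pd 2 g y := by
    intro g; funext y; simp only [rad, grad, inner_vec]
  have hdA : ∀ i j k : Fin 3, pd i (fun y => y j * pd k f y - y k * pd j f y)
      = fun y => ((if j = i then (1:ℝ) else 0) * pd k f y + y j * pd i (pd k f) y)
        - ((if k = i then (1:ℝ) else 0) * pd j f y + y k * pd i (pd j f) y) := by
    intro i j k; funext y
    rw [pd_sub (by fun_prop) (by fun_prop), pd_mul (by fun_prop) (by fun_prop),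
        pd_mul (by fun_prop) (by fun_prop), pd_coord, pd_coord]
  have hpdradf : ∀ j : Fin 3, pd j (fun y : E3 => y 0 * pd 0 f y + y 1 * pd 1 f y + y 2 * pd 2 f y)
      = fun y : E3 =>
      pd j f y + (y 0 * pd j (pd 0 f) y + y 1 * pd j (pd 1 f) y + y 2 * pd j (pd 2 f) y) := by
    intro j; funext y
    have hj3 : j = 0 ∨ j = 1 ∨ j = 2 := by omega
    rcases hj3 with rfl|rfl|rfl <;>
    · simp (disch := fun_prop) only [pd_add, pd_mul, pd_coord, Fin.reduceEq, reduceIte]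
      ring
  -- expansion of the eigen-equation
  have hSfun : (fun y => SL α c f y) = (fun y : E3 =>
      -(pd 0 (pd 0 f) y) - pd 1 (pd 1 f) y - pd 2 (pd 2 f) y
      + (y 0 * (pd 0 f y + (y 0 * pd 0 (pd 0 f) y + y 1 * pd 0 (pd 1 f) y + y 2 * pd 0 (pd 2 f) y))
        + (y 1 * (pd 1 f y + (y 0 * pd 1 (pd 0 f) y + y 1 * pd 1 (pd 1 f) y + y 2 * pd 1 (pd 2 f) y))
        + y 2 * (pd 2 f y + (y 0 * pd 2 (pd 0 f) y + y 1 * pd 2 (pd 1 f) y + y 2 * pd 2 (pd 2 f) y))))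
      + ((2*α+3) * (y 0 * pd 0 f y + (y 1 * pd 1 f y + y 2 * pd 2 f y))
        + c^2 * ((y 0 * y 0 + (y 1 * y 1 + y 2 * y 2)) * f y))) := by
    funext y
    simp only [SL, lap, hradf, hpdradf]
    rw [norm_sq_expand]
    ring
  have hev : (fun y => SL α c f y) =ᶠ[nhds x] (fun y => χ * f y) := by
    have hball : Metric.ball (0:E3) 1 ∈ nhds x :=
      Metric.isOpen_ball.mem_nhds (by simpa [Metric.mem_ball, dist_eq_norm] using hx)
    filter_upwards [hball] with y hy
    exact heig y (by simpa [Metric.mem_ball, dist_eq_norm] using hy)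
  have hEqA : ∀ i, pd i (fun y => SL α c f y) x = χ * pd i f x := by
    intro i
    have h1 : pd i (fun y => SL α c f y) x = pd i (fun y => χ * f y) x := by
      simp only [pd]; rw [hev.fderiv_eq]
    rw [h1, pd_const_mul hd0.differentiableAt]
  rw [hSfun] at hEqA
  have hE0 := hEqA 0
  have hE1 := hEqA 1
  have hE2 := hEqA 2
  simp (disch := fun_prop) only [pd_sub, pd_add, pd_neg, pd_mul, pd_const_mul, pd_coord,
    pd_const, Fin.reduceEq, reduceIte] at hE0 hE1 hE2
  simp only [s10, s20, s21, t10, t20, t21] at hE0 hE1 hE2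
  -- componentwise goals
  have h0 : Dop α c (angGrad f) x 0 = ((χ + 2*α + 2) • angGrad f x) 0 := by
    simp only [Dop, angGrad, cross, grad, curl, lapBelV, lapBel, lap, vec_zero, vec_one,
      vec_two, PiLp.smul_apply, PiLp.sub_apply, PiLp.add_apply, smul_eq_mul, hradf, mul_sub]
    simp only [hdA, Fin.reduceEq, reduceIte, zero_mul, mul_zero, one_mul, zero_add,
      add_zero, sub_zero, zero_sub]
    simp (disch := fun_prop) only [pd_sub, mul_sub, hpdWC]
    simp (disch := fun_prop) only [pd_sub, pd_add, pd_neg, pd_mul, pd_const_mul, pd_coord,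
      pd_const, Fin.reduceEq, reduceIte]
    simp only [s10, s20, s21, t10, t20, t21]
    simp only [norm_sq_expand]
    linear_combination (x 1) * hE2 - (x 2) * hE1
  have h1 : Dop α c (angGrad f) x 1 = ((χ + 2*α + 2) • angGrad f x) 1 := by
    simp only [Dop, angGrad, cross, grad, curl, lapBelV, lapBel, lap, vec_zero, vec_one,
      vec_two, PiLp.smul_apply, PiLp.sub_apply, PiLp.add_apply, smul_eq_mul, hradf, mul_sub]
    simp only [hdA, Fin.reduceEq, reduceIte, zero_mul, mul_zero, one_mul, zero_add,
      add_zero, sub_zero, zero_sub]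
    simp (disch := fun_prop) only [pd_sub, mul_sub, hpdWC]
    simp (disch := fun_prop) only [pd_sub, pd_add, pd_neg, pd_mul, pd_const_mul, pd_coord,
      pd_const, Fin.reduceEq, reduceIte]
    simp only [s10, s20, s21, t10, t20, t21]
    simp only [norm_sq_expand]
    linear_combination (x 2) * hE0 - (x 0) * hE2
  have h2 : Dop α c (angGrad f) x 2 = ((χ + 2*α + 2) • angGrad f x) 2 := by
    simp only [Dop, angGrad, cross, grad, curl, lapBelV, lapBel, lap, vec_zero, vec_one,
      vec_two, PiLp.smul_apply, PiLp.sub_apply, PiLp.add_apply, smul_eq_mul, hradf, mul_sub]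
    simp only [hdA, Fin.reduceEq, reduceIte, zero_mul, mul_zero, one_mul, zero_add,
      add_zero, sub_zero, zero_sub]
    simp (disch := fun_prop) only [pd_sub, mul_sub, hpdWC]
    simp (disch := fun_prop) only [pd_sub, pd_add, pd_neg, pd_mul, pd_const_mul, pd_coord,
      pd_const, Fin.reduceEq, reduceIte]
    simp only [s10, s20, s21, t10, t20, t21]
    simp only [norm_sq_expand]
    linear_combination (x 0) * hE1 - (x 1) * hE0
  ext i
  have hi : i = 0 ∨ i = 1 ∨ i = 2 := by omega
  rcases hi with rfl|rfl|rfl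
  · exact h0
  · exact h1
  · exact h2
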